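/- arXiv:2308.15520 — 2 statements merged into one kernel-verified Lean document; each statement's English description precedes it below -/
import Mathlib

section
/- Let H1, H2 be GF(2) matrices with ker H1 ≠ 0 and ker H2ᵀ ≠ 0, with nonzero kernel elements of H1 having weight ≥ d1 and of H2ᵀ weight ≥ d2ᵀ. For any z ∈ ker H_X \\ Im H_Zᵀ, either there are at least d1 indices t ∈ {1,...,n1} such that the bit-type block (e_tᵀ ⊗ I_{n2}) z₁ is nonzero, or there are at least d2ᵀ indices t̃ ∈ {1,...,r2} such that the check-type block (I_{r1} ⊗ ẽ_{t̃}ᵀ) z₂ is nonzero, where z = (z₁, z₂). -/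
/-!
Write `z = (vec Aᵀ, vec Bᵀ)` with `A : n₁ × n₂` and `B : r₁ × r₂`. Then `H_X z = 0` reads
`H₁ A = B H₂`, and `z ∈ im H_Zᵀ` reads `A = C H₂`, `B = H₁ C` for some `C : n₁ × r₂`.
Suppose the nonzero rows of `A` lie in `S` with `|S| < d₁` and the nonzero columns of `B` lie in
`T` with `|T| < d₂ᵀ`. A dependency among the rows of `H₂` indexed by `T` would be a nonzero vector
of `ker H₂ᵀ` of weight `< d₂ᵀ`, so those rows are independent and `H₂` has a right inverse `N` on
them; `C := A N` then satisfies `H₁ C = B H₂ N = B`. Finally `H₁ (A - C H₂) = 0` and the nonzero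
rows of `A - C H₂` lie in `S`, so each of its columns is a vector of `ker H₁` of weight `< d₁`,
whence `A = C H₂` and `z` lies in `im H_Zᵀ`.
-/

open Matrix Kronecker

namespace Matrix

theorem fromCols_kronecker_mulVec_sumElim_vec {R r₁ n₁ r₂ n₂ : Type*} [CommSemiring R]
    [Fintype r₁] [Fintype n₁] [Fintype n₂] [Fintype r₂] [DecidableEq r₁] [DecidableEq n₂]
    (H₁ : Matrix r₁ n₁ R) (H₂ : Matrix r₂ n₂ R) (A : Matrix n₁ n₂ R) (B : Matrix r₁ r₂ R) :
    fromCols (H₁ ⊗ₖ (1 : Matrix n₂ n₂ R)) ((1 : Matrix r₁ r₁ R) ⊗ₖ H₂ᵀ) *ᵥ (vec Aᵀ ⊕ᵥ vec Bᵀ) =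
      vec (H₁ * A + B * H₂)ᵀ := by
  rw [fromCols_mulVec_sumElim, kronecker_mulVec_vec, kronecker_mulVec_vec]
  simp [transpose_add, transpose_mul]

theorem transpose_fromCols_kronecker_mulVec_vec {R r₁ n₁ r₂ n₂ : Type*} [CommSemiring R]
    [Fintype n₁] [Fintype r₂] [DecidableEq n₁] [DecidableEq r₂]
    (H₁ : Matrix r₁ n₁ R) (H₂ : Matrix r₂ n₂ R) (C : Matrix n₁ r₂ R) :
    (fromCols ((1 : Matrix n₁ n₁ R) ⊗ₖ H₂) (H₁ᵀ ⊗ₖ (1 : Matrix r₂ r₂ R)))ᵀ *ᵥ vec Cᵀ =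
      vec (C * H₂)ᵀ ⊕ᵥ vec (H₁ * C)ᵀ := by
  rw [transpose_fromCols, fromRows_mulVec, ← kroneckerMap_transpose, ← kroneckerMap_transpose,
    kronecker_mulVec_vec, kronecker_mulVec_vec]
  simp [transpose_mul]

theorem eq_zero_of_mulVec_eq_zero_of_card_lt {R m n : Type*} [Semiring R] [DecidableEq R]
    [Fintype n] {H : Matrix m n R} {d : ℕ}
    (hd : ∀ v, H *ᵥ v = 0 → v ≠ 0 → d ≤ hammingNorm v) {S : Finset n} (hS : S.card < d) :
    ∀ v, H *ᵥ v = 0 → (∀ t ∉ S, v t = 0) → v = 0 := by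
  intro v hv hvS
  by_contra hv0
  have hweight : hammingNorm v ≤ S.card :=
    Finset.card_le_card fun t ht => by_contra fun htS => (Finset.mem_filter.mp ht).2 (hvS t htS)
  exact absurd (hd v hv hv0) (by omega)

theorem eq_zero_of_mul_eq_zero_of_support_subset {R r n p : Type*} [Semiring R] [Fintype n]
    {H : Matrix r n R} {S : Finset n} (hS : ∀ v, H *ᵥ v = 0 → (∀ t ∉ S, v t = 0) → v = 0)
    {X : Matrix n p R} (hHX : H * X = 0) (hX : ∀ t ∉ S, X t = 0) : X = 0 := by
  ext t j
  have hcol : Xᵀ j = 0 := by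
    refine hS _ ?_ fun t ht => congrFun (hX t ht) j
    ext i
    exact congrFun (congrFun hHX i) j
  exact congrFun hcol t

variable {K : Type*} [Field K]

theorem exists_mul_eq_one_of_linearIndependent_row {m n : Type*} [Fintype m] [Fintype n]
    [DecidableEq m] {P : Matrix m n K} (hP : LinearIndependent K P.row) :
    ∃ Q : Matrix n m K, P * Q = 1 := by
  refine mulVec_surjective_iff_exists_right_inverse.mp
    ((LinearMap.range_eq_top (f := P.mulVecLin)).mp ?_)
  exact Submodule.eq_top_of_finrank_eq
    (by rw [← rank, hP.rank_matrix, Module.finrank_fintype_fun_eq_card])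

def selectRows (R : Type*) [Zero R] [One R] {m : Type*} [DecidableEq m] (T : Finset m) :
    Matrix T m R :=
  (1 : Matrix m m R).submatrix (↑) id

section SelectRows

variable {k m n : Type*} [DecidableEq m] {T : Finset m}

theorem selectRows_mul_transpose [Fintype m] : selectRows K T * (selectRows K T)ᵀ = 1 := by
  ext i j
  simp [selectRows, one_apply, mul_apply]

theorem vecMul_selectRows_apply_of_notMem (c : T → K) {l : m} (hl : l ∉ T) :
    (c ᵥ* selectRows K T) l = 0 :=
  Finset.sum_eq_zero fun t _ => by simp [selectRows, ne_of_mem_of_not_mem t.2 hl]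

theorem mul_transpose_selectRows_mul_selectRows [Fintype m] {B : Matrix k m K}
    (hB : ∀ l ∉ T, Bᵀ l = 0) : B * (selectRows K T)ᵀ * selectRows K T = B := by
  ext i l
  simp only [selectRows, mul_apply, transpose_apply, submatrix_apply, id, one_apply, mul_ite,
    mul_one, mul_zero, Finset.sum_ite_eq, Finset.mem_univ, if_true]
  rw [Finset.sum_coe_sort T (fun j => if j = l then B i j else 0), Finset.sum_ite_eq']
  split_ifs with hl
  · rfl
  · exact (congrFun (hB l hl) i).symm

theorem linearIndependent_row_selectRows_mul [Fintype m] {M : Matrix m n K}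
    (hT : ∀ c, Mᵀ *ᵥ c = 0 → (∀ l ∉ T, c l = 0) → c = 0) :
    LinearIndependent K (selectRows K T * M).row := by
  rw [← vecMul_injective_iff, ← coe_vecMulLinear, ← LinearMap.ker_eq_bot, LinearMap.ker_eq_bot']
  intro c hc
  have hcE : c ᵥ* selectRows K T = 0 := by
    refine hT _ ?_ fun l hl => vecMul_selectRows_apply_of_notMem c hl
    rwa [mulVec_transpose, vecMul_vecMul]
  rw [← vecMul_one c, ← selectRows_mul_transpose, ← vecMul_vecMul, hcE, zero_vecMul]

theorem exists_mul_mul_eq_self_of_support_subset [Fintype k] [Fintype m] [Fintype n]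
    {M : Matrix m n K} (hT : ∀ c, Mᵀ *ᵥ c = 0 → (∀ l ∉ T, c l = 0) → c = 0) :
    ∃ N : Matrix n m K, ∀ B : Matrix k m K, (∀ l ∉ T, Bᵀ l = 0) → B * M * N = B := by
  obtain ⟨Q, hQ⟩ := exists_mul_eq_one_of_linearIndependent_row
    (linearIndependent_row_selectRows_mul hT)
  refine ⟨Q * selectRows K T, fun B hB => ?_⟩
  calc B * M * (Q * selectRows K T)
      = B * (selectRows K T)ᵀ * (selectRows K T * M * Q) * selectRows K T := by
        conv_lhs => rw [← mul_transpose_selectRows_mul_selectRows hB]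
        simp only [Matrix.mul_assoc]
    _ = B := by rw [hQ, Matrix.mul_one, mul_transpose_selectRows_mul_selectRows hB]

end SelectRows

theorem exists_eq_mul_and_eq_mul_of_mul_eq_mul {r₁ n₁ r₂ n₂ : Type*} [Fintype r₁] [Fintype n₁]
    [Fintype r₂] [Fintype n₂] [DecidableEq r₂] {H₁ : Matrix r₁ n₁ K} {H₂ : Matrix r₂ n₂ K}
    {S : Finset n₁} {T : Finset r₂} (hS : ∀ v, H₁ *ᵥ v = 0 → (∀ t ∉ S, v t = 0) → v = 0)
    (hT : ∀ c, H₂ᵀ *ᵥ c = 0 → (∀ l ∉ T, c l = 0) → c = 0)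
    {A : Matrix n₁ n₂ K} {B : Matrix r₁ r₂ K} (hAB : H₁ * A = B * H₂)
    (hA : ∀ t ∉ S, A t = 0) (hB : ∀ l ∉ T, Bᵀ l = 0) :
    ∃ C : Matrix n₁ r₂ K, A = C * H₂ ∧ B = H₁ * C := by
  obtain ⟨N, hN⟩ := exists_mul_mul_eq_self_of_support_subset (k := r₁) hT
  have hB' : H₁ * (A * N) = B := by rw [← Matrix.mul_assoc, hAB, hN B hB]
  refine ⟨A * N, ?_, hB'.symm⟩
  rw [← sub_eq_zero]
  refine eq_zero_of_mul_eq_zero_of_support_subset hS ?_ fun t ht => ?_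
  · rw [Matrix.mul_sub, ← Matrix.mul_assoc, hB', hAB, sub_self]
  · ext j
    simp [mul_apply, hA t ht]

end Matrix

theorem hgp_row_column_support_general (r1 n1 r2 n2 d1 d2T : ℕ)
    (H1 : Matrix (Fin r1) (Fin n1) (ZMod 2))
    (H2 : Matrix (Fin r2) (Fin n2) (ZMod 2))
    (hd1 : ∀ v : Fin n1 → ZMod 2, H1.mulVec v = 0 → v ≠ 0 → d1 ≤ hammingNorm v)
    (hd2T : ∀ v : Fin r2 → ZMod 2, H2ᵀ.mulVec v = 0 → v ≠ 0 → d2T ≤ hammingNorm v)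
    (z : (Fin n1 × Fin n2) ⊕ (Fin r1 × Fin r2) → ZMod 2)
    (hzker : (Matrix.fromCols (H1 ⊗ₖ (1 : Matrix (Fin n2) (Fin n2) (ZMod 2)))
        ((1 : Matrix (Fin r1) (Fin r1) (ZMod 2)) ⊗ₖ H2ᵀ)).mulVec z = 0)
    (hznotim : ∀ w : Fin n1 × Fin r2 → ZMod 2,
      (Matrix.fromCols ((1 : Matrix (Fin n1) (Fin n1) (ZMod 2)) ⊗ₖ H2)
        (H1ᵀ ⊗ₖ (1 : Matrix (Fin r2) (Fin r2) (ZMod 2))))ᵀ.mulVec w ≠ z) :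
    d1 ≤ {t : Fin n1 | (fun s => z (Sum.inl (t, s))) ≠ 0}.ncard ∨
      d2T ≤ {tt : Fin r2 | (fun i => z (Sum.inr (i, tt))) ≠ 0}.ncard := by
  classical
  set A : Matrix (Fin n1) (Fin n2) (ZMod 2) := of fun t s => z (Sum.inl (t, s))
  set B : Matrix (Fin r1) (Fin r2) (ZMod 2) := of fun i l => z (Sum.inr (i, l))
  have hz : z = vec Aᵀ ⊕ᵥ vec Bᵀ := by ext (⟨t, s⟩ | ⟨i, l⟩) <;> rfl
  rw [hz, fromCols_kronecker_mulVec_sumElim_vec, vec_eq_zero_iff, transpose_eq_zero] at hzker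
  have hAB : H1 * A = B * H2 := by
    ext i j
    exact CharTwo.add_eq_zero.mp (congrFun (congrFun hzker i) j)
  by_contra! hsmall
  rw [Set.ncard_eq_toFinset_card', Set.ncard_eq_toFinset_card'] at hsmall
  obtain ⟨C, hCA, hCB⟩ := exists_eq_mul_and_eq_mul_of_mul_eq_mul
    (eq_zero_of_mulVec_eq_zero_of_card_lt hd1 hsmall.1)
    (eq_zero_of_mulVec_eq_zero_of_card_lt hd2T hsmall.2) hAB
    (fun t ht => by_contra fun h => ht (Set.mem_toFinset.mpr h))
    (fun l hl => by_contra fun h => hl (Set.mem_toFinset.mpr h))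
  exact hznotim (vec Cᵀ) (by rw [transpose_fromCols_kronecker_mulVec_vec, ← hCA, ← hCB, hz])

/-- Row/column support lemma: any logical Z operator has support in at least `d1`
distinct bit-type rows or at least `d2ᵀ` distinct check-type columns. -/
theorem hgp_row_column_support (r1 n1 r2 n2 d1 d2T : ℕ)
    (H1 : Matrix (Fin r1) (Fin n1) (ZMod 2))
    (H2 : Matrix (Fin r2) (Fin n2) (ZMod 2))
    (hker1 : ∃ v : Fin n1 → ZMod 2, v ≠ 0 ∧ H1.mulVec v = 0)
    (hker2T : ∃ v : Fin r2 → ZMod 2, v ≠ 0 ∧ H2ᵀ.mulVec v = 0)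
    (hd1 : ∀ v : Fin n1 → ZMod 2, H1.mulVec v = 0 → v ≠ 0 → d1 ≤ hammingNorm v)
    (hd2T : ∀ v : Fin r2 → ZMod 2, H2ᵀ.mulVec v = 0 → v ≠ 0 → d2T ≤ hammingNorm v)
    (z : (Fin n1 × Fin n2) ⊕ (Fin r1 × Fin r2) → ZMod 2)
    (hzker : (Matrix.fromCols (H1 ⊗ₖ (1 : Matrix (Fin n2) (Fin n2) (ZMod 2)))
        ((1 : Matrix (Fin r1) (Fin r1) (ZMod 2)) ⊗ₖ H2ᵀ)).mulVec z = 0)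
    (hznotim : ∀ w : Fin n1 × Fin r2 → ZMod 2,
      (Matrix.fromCols ((1 : Matrix (Fin n1) (Fin n1) (ZMod 2)) ⊗ₖ H2)
        (H1ᵀ ⊗ₖ (1 : Matrix (Fin r2) (Fin r2) (ZMod 2))))ᵀ.mulVec w ≠ z) :
    d1 ≤ {t : Fin n1 | (fun s => z (Sum.inl (t, s))) ≠ 0}.ncard ∨
      d2T ≤ {tt : Fin r2 | (fun i => z (Sum.inr (i, tt))) ≠ 0}.ncard :=
  hgp_row_column_support_general r1 n1 r2 n2 d1 d2T H1 H2 hd1 hd2T z hzker hznotim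
end

section
/- Let A be an r1×n1 matrix and B an r2×n2 matrix over GF(2). Then rank of the block matrix (A ⊗ I_{n2} , I_{r1} ⊗ Bᵀ) equals n2·rank(A) + r1·rank(B) − rank(A)·rank(B). -/
/-!
The column space of `[A ⊗ I | I ⊗ Bᵀ]` is the sum of `col A ⊗ K^{n₂}` and `K^{r₁} ⊗ col Bᵀ`, whose
intersection is `col A ⊗ col Bᵀ`. Since ranks multiply under Kronecker products, the Grassmann
formula `dim (U + W) = dim U + dim W - dim (U ∩ W)` gives the claim. The intersection is computed
with generalized inverses `A G A = A`: `A G` fixes the column space of `A` pointwise, so a vector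
fixed by both `A G ⊗ I` and `I ⊗ Bᵀ H` is fixed by `A G ⊗ Bᵀ H` and lies in the range of `A ⊗ Bᵀ`.
-/

open Matrix Kronecker Module

variable {K : Type*} [Field K]

theorem LinearMap.exists_comp_comp_eq_self {V W : Type*} [AddCommGroup V] [Module K V]
    [AddCommGroup W] [Module K W] (f : V →ₗ[K] W) : ∃ g : W →ₗ[K] V, f ∘ₗ g ∘ₗ f = f := by
  obtain ⟨p, hp⟩ := (range f).subtype.exists_leftInverse_of_injective (range f).ker_subtype
  obtain ⟨s, hs⟩ := f.rangeRestrict.exists_rightInverse_of_surjective f.range_rangeRestrict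
  refine ⟨s ∘ₗ p, LinearMap.ext fun x => ?_⟩
  have hpf : p (f x) = f.rangeRestrict x := congr($hp (f.rangeRestrict x))
  have hfs : ∀ y, f (s y) = y := fun y => congr(((range f).subtype ∘ₗ $hs) y)
  simp [hpf, hfs]

theorem LinearMap.finrank_range_map {V V' W W' : Type*}
    [AddCommGroup V] [AddCommGroup V'] [AddCommGroup W] [AddCommGroup W']
    [Module K V] [Module K V'] [Module K W] [Module K W']
    [FiniteDimensional K V] [FiniteDimensional K W] (f : V →ₗ[K] V') (g : W →ₗ[K] W') :
    finrank K (range (TensorProduct.map f g)) = finrank K (range f) * finrank K (range g) := by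
  have hrange : range (TensorProduct.map f g) =
      range (TensorProduct.mapIncl (range f) (range g)) := by
    rw [TensorProduct.range_map, TensorProduct.range_mapIncl]
  rw [hrange, finrank_range_of_inj (Flat.tensorProduct_mapIncl_injective_of_right _ _),
    finrank_tensorProduct]

namespace Matrix

variable {m n p q : Type*}

theorem exists_mul_mul_eq_self [Fintype m] [Fintype n] [DecidableEq m] [DecidableEq n] (M : Matrix m n K) :
    ∃ G : Matrix n m K, M * G * M = M := by
  obtain ⟨g, hg⟩ := M.mulVecLin.exists_comp_comp_eq_self
  refine ⟨LinearMap.toMatrix' g, toLin'.injective ?_⟩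
  rw [toLin'_mul, toLin'_mul, toLin'_toMatrix']
  exact hg

theorem mulVec_mul_eq_self_of_mem_range [Fintype m] [Fintype n] {M : Matrix m n K} {G : Matrix n m K}
    (hG : M * G * M = M) {v : m → K} (hv : v ∈ LinearMap.range M.mulVecLin) :
    (M * G) *ᵥ v = v := by
  obtain ⟨x, rfl⟩ := hv
  rw [mulVecLin_apply, mulVec_mulVec, hG]

theorem range_mulVecLin_mul_le [Fintype n] [Fintype p] (M : Matrix m n K) (N : Matrix n p K) :
    LinearMap.range (M * N).mulVecLin ≤ LinearMap.range M.mulVecLin := by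
  rw [mulVecLin_mul]
  exact LinearMap.range_comp_le_range _ _

theorem range_mulVecLin_fromCols [Fintype n] [Fintype p] (M : Matrix m n K) (N : Matrix m p K) :
    LinearMap.range (fromCols M N).mulVecLin =
      LinearMap.range M.mulVecLin ⊔ LinearMap.range N.mulVecLin := by
  have hcol : (fromCols M N).col = Sum.elim M.col N.col := by
    ext j i
    cases j <;> rfl
  rw [range_mulVecLin, range_mulVecLin, range_mulVecLin, hcol, Set.Sum.elim_range,
    Submodule.span_union]

theorem rank_fromCols_add_finrank_inf [Fintype m] [Fintype n] [Fintype p] (M : Matrix m n K) (N : Matrix m p K) :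
    (fromCols M N).rank + finrank K ↥(LinearMap.range M.mulVecLin ⊓ LinearMap.range N.mulVecLin) =
      M.rank + N.rank := by
  rw [rank, range_mulVecLin_fromCols]
  exact Submodule.finrank_sup_add_finrank_inf_eq _ _

theorem rank_kronecker [Fintype m] [Fintype n] [Fintype p] [Fintype q] [DecidableEq n] [DecidableEq q] (A : Matrix m n K) (B : Matrix p q K) :
    (A ⊗ₖ B).rank = A.rank * B.rank := by
  rw [rank_eq_finrank_range_toLin (A ⊗ₖ B)
      ((Pi.basisFun K m).tensorProduct (Pi.basisFun K p))
      ((Pi.basisFun K n).tensorProduct (Pi.basisFun K q)),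
    toLin_kronecker, LinearMap.finrank_range_map,
    ← rank_eq_finrank_range_toLin, ← rank_eq_finrank_range_toLin]

theorem range_kronecker_one_inf_one_kronecker [Fintype m] [Fintype n] [Fintype p] [Fintype q]
    [DecidableEq m] [DecidableEq n] [DecidableEq p] [DecidableEq q] (A : Matrix m n K) (B : Matrix p q K) :
    LinearMap.range (A ⊗ₖ (1 : Matrix p p K)).mulVecLin ⊓
        LinearMap.range ((1 : Matrix m m K) ⊗ₖ B).mulVecLin =
      LinearMap.range (A ⊗ₖ B).mulVecLin := by
  apply le_antisymm
  · rintro v ⟨hvA, hvB⟩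
    obtain ⟨G, hG⟩ := A.exists_mul_mul_eq_self
    obtain ⟨H, hH⟩ := B.exists_mul_mul_eq_self
    have hGA : (A ⊗ₖ (1 : Matrix p p K)) * (G ⊗ₖ (1 : Matrix p p K)) * (A ⊗ₖ (1 : Matrix p p K)) =
        A ⊗ₖ (1 : Matrix p p K) := by
      simp only [← mul_kronecker_mul, hG, Matrix.mul_one]
    have hHB : ((1 : Matrix m m K) ⊗ₖ B) * ((1 : Matrix m m K) ⊗ₖ H) * ((1 : Matrix m m K) ⊗ₖ B) =
        (1 : Matrix m m K) ⊗ₖ B := by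
      simp only [← mul_kronecker_mul, hH, Matrix.mul_one]
    refine ⟨(G ⊗ₖ H) *ᵥ v, ?_⟩
    calc (A ⊗ₖ B) *ᵥ ((G ⊗ₖ H) *ᵥ v)
        = ((A ⊗ₖ (1 : Matrix p p K)) * (G ⊗ₖ (1 : Matrix p p K))) *ᵥ
            (((1 : Matrix m m K) ⊗ₖ B) * ((1 : Matrix m m K) ⊗ₖ H)) *ᵥ v := by
          simp only [mulVec_mulVec, ← mul_kronecker_mul, Matrix.mul_one, Matrix.one_mul]
      _ = v := by
          rw [mulVec_mul_eq_self_of_mem_range hHB hvB, mulVec_mul_eq_self_of_mem_range hGA hvA]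
  · have hA : (A ⊗ₖ (1 : Matrix p p K)) * ((1 : Matrix n n K) ⊗ₖ B) = A ⊗ₖ B := by
      rw [← mul_kronecker_mul, Matrix.mul_one, Matrix.one_mul]
    have hB : ((1 : Matrix m m K) ⊗ₖ B) * (A ⊗ₖ (1 : Matrix q q K)) = A ⊗ₖ B := by
      rw [← mul_kronecker_mul, Matrix.mul_one, Matrix.one_mul]
    exact le_inf (hA ▸ range_mulVecLin_mul_le _ _) (hB ▸ range_mulVecLin_mul_le _ _)

end Matrix

/-- Rank of the X-check matrix of a hypergraph product code. -/
theorem hgp_rank_HX (r1 n1 r2 n2 : ℕ)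
    (A : Matrix (Fin r1) (Fin n1) (ZMod 2))
    (B : Matrix (Fin r2) (Fin n2) (ZMod 2)) :
    (Matrix.fromCols (A ⊗ₖ (1 : Matrix (Fin n2) (Fin n2) (ZMod 2)))
        ((1 : Matrix (Fin r1) (Fin r1) (ZMod 2)) ⊗ₖ Bᵀ)).rank =
      n2 * A.rank + r1 * B.rank - A.rank * B.rank := by
  have h := rank_fromCols_add_finrank_inf (A ⊗ₖ (1 : Matrix (Fin n2) (Fin n2) (ZMod 2)))
    ((1 : Matrix (Fin r1) (Fin r1) (ZMod 2)) ⊗ₖ Bᵀ)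
  rw [range_kronecker_one_inf_one_kronecker, ← rank, rank_kronecker, rank_kronecker,
    rank_kronecker, rank_one, rank_one, rank_transpose, Fintype.card_fin, Fintype.card_fin] at h
  rw [mul_comm n2]
  omega
end
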